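/- Let G be a finite cyclic group and X a finite G-set. Let A = ⊕_{x∈X} Zx be the free abelian group on X with G acting by permuting basis elements. Then the Herbrand quotient h(G, A) = ∏_{x ∈ X/G} #G_x. -/

import Mathlib

variable (G : Type*) [Group G] [Fintype G] (A : Type*) [AddCommGroup A] [DistribMulAction G A]

/-- The norm map `a ↦ ∑_{τ ∈ G} τ • a`. -/
noncomputable def normMap : A →+ A := ∑ τ : G, DistribMulAction.toAddMonoidHom A τ

/-- The map `a ↦ a - σ • a`. -/
def oneSubMap (σ : G) : A →+ A := AddMonoidHom.id A - DistribMulAction.toAddMonoidHom A σ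

/-- The subgroup of `G`-fixed points `A^G`. -/
def fixedSub : AddSubgroup A where
  carrier := {a | ∀ τ : G, τ • a = a}
  zero_mem' := fun τ => smul_zero τ
  add_mem' := fun ha hb τ => by rw [smul_add, ha τ, hb τ]
  neg_mem' := fun ha τ => by rw [smul_neg, ha τ]

/-- `#H¹(G,A)` for `G` cyclic with generator `σ`, computed as `#(ker N_G / (1-σ)A)`. -/
noncomputable def H1card (σ : G) : ℕ :=
  Nat.card ((normMap G A).ker ⧸ ((oneSubMap G A σ).range.addSubgroupOf (normMap G A).ker))

/-- `#Ĥ⁰(G,A) = (A^G : N_G A)`. -/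
noncomputable def H0card : ℕ :=
  Nat.card (fixedSub G A ⧸ ((normMap G A).range.addSubgroupOf (fixedSub G A)))

/-- The Herbrand quotient `h(G,A) = #Ĥ⁰(G,A) / #H¹(G,A)`. -/
noncomputable def herbrand (σ : G) : ℚ := (H0card G A : ℚ) / (H1card G A σ : ℚ)

attribute [local instance] Finsupp.comapSMul Finsupp.comapMulAction Finsupp.comapDistribMulAction

/-!
By orbit–stabilizer, `(N f)(y) = #G_y • ∑_{x ∈ G y} f x`. If `N f = 0`, all orbit sums of `f`
vanish, so `f` is a sum of terms `a - τ • a`; each of these lies in `(1 - σ) A` because `σ`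
generates `G`, hence `H¹ = 0`. A fixed vector is constant on orbits, and it is a norm exactly when
its value on each orbit `G x` is divisible by `#G_x`; this gives `Ĥ⁰ ≅ ∏_{X/G} ℤ/#G_x`.
-/

open MulAction

namespace MulAction

variable {G X : Type*} [Group G] [MulAction G X]

theorem orbitProdStabilizerEquivGroup_smul (b : X) (p : orbit G b × stabilizer G b) :
    orbitProdStabilizerEquivGroup G b p • b = p.1 := by
  have hmk : (orbitProdStabilizerEquivGroup G b p : G ⧸ stabilizer G b) =
      orbitEquivQuotientStabilizer G b p.1 :=
    congr_arg Prod.fst (Subgroup.groupEquivQuotientProdSubgroup.apply_symm_apply _)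
  rw [← orbitEquivQuotientStabilizer_symm_apply, hmk, Equiv.symm_apply_apply]

theorem sum_smul_eq_card_stabilizer_nsmul_sum_orbit [Fintype G] {M : Type*} [AddCommMonoid M]
    (b : X) [Fintype (orbit G b)] (v : X → M) :
    ∑ g : G, v (g • b) = Nat.card (stabilizer G b) • ∑ x : orbit G b, v x := by
  classical
  rw [← (orbitProdStabilizerEquivGroup G b).sum_comp, Fintype.sum_prod_type_right]
  simp only [orbitProdStabilizerEquivGroup_smul, Finset.sum_const, Finset.card_univ,
    Nat.card_eq_fintype_card]

end MulAction

theorem Finsupp.mapDomain_orbitRel_mk_apply {G X M : Type*} [Group G] [MulAction G X]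
    [AddCommMonoid M] (y : X) [Fintype (orbit G y)] (f : X →₀ M) :
    f.mapDomain (Quotient.mk (orbitRel G X)) (Quotient.mk _ y) = ∑ x : orbit G y, f x := by
  classical
  induction f using Finsupp.induction_linear with
  | zero => simp
  | add f g hf hg => simp [mapDomain_add, hf, hg, Finset.sum_add_distrib]
  | single a c =>
    rw [mapDomain_single, single_apply]
    split_ifs with ha <;> rw [Quotient.eq, orbitRel_apply] at ha
    · rw [Fintype.sum_eq_single ⟨a, ha⟩ fun x hx => single_eq_of_ne (Subtype.coe_ne_coe.mpr hx)]
      simp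
    · refine (Finset.sum_eq_zero fun (x : orbit G y) _ => single_eq_of_ne ?_).symm
      exact fun h : (x : X) = a => ha (h ▸ x.2)

section CyclicCoinvariants

variable {G A : Type*} [Group G] [AddCommGroup A] [DistribMulAction G A]

theorem oneSubMap_apply (σ : G) (a : A) : oneSubMap G A σ a = a - σ • a := rfl

theorem sub_smul_mem_range_oneSubMap_of_mem_zpowers {σ τ : G} (hτ : τ ∈ Subgroup.zpowers σ)
    (a : A) : a - τ • a ∈ (oneSubMap G A σ).range := by
  obtain ⟨n, rfl⟩ := Subgroup.mem_zpowers_iff.mp hτ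
  clear hτ
  induction n using Int.induction_on generalizing a with
  | zero => simp
  | succ n ih =>
    have hσ : oneSubMap G A σ a ∈ (oneSubMap G A σ).range := ⟨a, rfl⟩
    have h := add_mem hσ (ih (σ • a))
    rwa [oneSubMap_apply, sub_add_sub_cancel, smul_smul, ← zpow_add_one] at h
  | pred n ih =>
    have hσ : oneSubMap G A σ (σ⁻¹ • a) ∈ (oneSubMap G A σ).range := ⟨_, rfl⟩
    have h := sub_mem (ih (σ⁻¹ • a)) hσ
    rwa [oneSubMap_apply, sub_sub_sub_cancel_left, smul_inv_smul, smul_smul,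
      ← zpow_sub_one] at h

end CyclicCoinvariants

section PermutationModule

variable {G X M : Type*} [Group G] [MulAction G X] [AddCommGroup M]

theorem sub_mapDomain_mem_range_oneSubMap {σ : G} (hgen : ∀ τ : G, τ ∈ Subgroup.zpowers σ)
    {π : X → X} (hπ : ∀ x, π x ∈ orbit G x) (f : X →₀ M) :
    f - f.mapDomain π ∈ (oneSubMap G (X →₀ M) σ).range := by
  induction f using Finsupp.induction_linear with
  | zero => simp
  | add f g hf hg =>
    rw [Finsupp.mapDomain_add, add_sub_add_comm]
    exact add_mem hf hg
  | single x c =>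
    obtain ⟨τ, hτ⟩ := hπ x
    rw [Finsupp.mapDomain_single, ← hτ, ← Finsupp.comapSMul_single]
    exact sub_smul_mem_range_oneSubMap_of_mem_zpowers (hgen τ) _

variable [Fintype G]

theorem normMap_finsupp_apply (f : X →₀ M) (y : X) :
    normMap G (X →₀ M) f y = ∑ τ : G, f (τ • y) := by
  simp only [normMap, AddMonoidHom.finset_sum_apply, DistribMulAction.toAddMonoidHom_apply,
    Finsupp.finset_sum_apply, Finsupp.comapSMul_apply]
  exact Fintype.sum_equiv (Equiv.inv G) _ _ fun _ => rfl

theorem normMap_finsupp_apply_eq_card_stabilizer_nsmul (f : X →₀ M) (y : X) :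
    normMap G (X →₀ M) f y =
      Nat.card (stabilizer G y) • f.mapDomain (Quotient.mk (orbitRel G X)) (Quotient.mk _ y) := by
  classical
  let _ : Fintype (orbit G y) := Set.fintypeRange _
  rw [normMap_finsupp_apply, sum_smul_eq_card_stabilizer_nsmul_sum_orbit,
    Finsupp.mapDomain_orbitRel_mk_apply]

theorem mapDomain_orbitRel_mk_eq_zero_of_normMap_eq_zero [IsAddTorsionFree M] {f : X →₀ M}
    (hf : normMap G (X →₀ M) f = 0) : f.mapDomain (Quotient.mk (orbitRel G X)) = 0 := by
  ext q
  induction q using Quotient.inductionOn with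
  | h y =>
    have hy := DFunLike.congr_fun hf y
    rw [normMap_finsupp_apply_eq_card_stabilizer_nsmul, Finsupp.zero_apply, smul_eq_zero] at hy
    exact hy.resolve_left Nat.card_pos.ne'

theorem ker_normMap_le_range_oneSubMap [IsAddTorsionFree M] {σ : G}
    (hgen : ∀ τ : G, τ ∈ Subgroup.zpowers σ) :
    (normMap G (X →₀ M)).ker ≤ (oneSubMap G (X →₀ M) σ).range := by
  intro f hf
  have hrep : f.mapDomain (fun x => (Quotient.mk (orbitRel G X) x).out) = 0 := by
    rw [← Function.comp_def, Finsupp.mapDomain_comp,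
      mapDomain_orbitRel_mk_eq_zero_of_normMap_eq_zero hf, Finsupp.mapDomain_zero]
  simpa [hrep] using sub_mapDomain_mem_range_oneSubMap hgen
    (fun x => orbitRel_apply.mp (Quotient.mk_out x)) f

theorem H1card_finsupp_eq_one [IsAddTorsionFree M] {σ : G}
    (hgen : ∀ τ : G, τ ∈ Subgroup.zpowers σ) : H1card G (X →₀ M) σ = 1 := by
  rw [H1card, AddSubgroup.addSubgroupOf_eq_top.mpr (ker_normMap_le_range_oneSubMap hgen)]
  exact Nat.card_eq_one_iff_unique.mpr ⟨QuotientAddGroup.subsingleton_quotient_top, ⟨0⟩⟩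

end PermutationModule

section FixedPoints

variable {G X : Type*} [Group G] [MulAction G X]

theorem mem_fixedSub_finsupp_iff {M : Type*} [AddCommGroup M] (f : X →₀ M) :
    f ∈ fixedSub G (X →₀ M) ↔ ∀ (τ : G) (y : X), f (τ • y) = f y := by
  refine ⟨fun h τ y => ?_, fun h τ => Finsupp.ext fun y => ?_⟩
  · simpa [Finsupp.comapSMul_apply] using DFunLike.congr_fun (h τ⁻¹) y
  · rw [Finsupp.comapSMul_apply, h]

variable (G X) in
noncomputable def fixedSubToZMod :
    fixedSub G (X →₀ ℤ) →+
      (q : Quotient (orbitRel G X)) → ZMod (Nat.card (stabilizer G q.out)) where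
  toFun f q := (f : X →₀ ℤ) q.out
  map_zero' := by ext; simp
  map_add' f g := by ext; simp

theorem fixedSubToZMod_surjective [Finite G] [Finite X] :
    Function.Surjective (fixedSubToZMod G X) := by
  intro c
  let f : X →₀ ℤ := Finsupp.equivFunOnFinite.symm fun y => ((c (Quotient.mk _ y)).val : ℤ)
  have hf : f ∈ fixedSub G (X →₀ ℤ) := (mem_fixedSub_finsupp_iff f).mpr fun τ y => by
    simp only [f, Finsupp.coe_equivFunOnFinite_symm]
    rw [Quotient.sound (orbitRel_apply.mpr (mem_orbit y τ))]
  refine ⟨⟨f, hf⟩, funext fun q => ?_⟩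
  have : NeZero (Nat.card (stabilizer G q.out)) := ⟨Nat.card_pos.ne'⟩
  change (((c _).val : ℤ) : ZMod _) = c q
  rw [Quotient.out_eq, Int.cast_natCast, ZMod.natCast_zmod_val]

theorem ker_fixedSubToZMod [Fintype G] [Finite X] :
    (fixedSubToZMod G X).ker =
      (normMap G (X →₀ ℤ)).range.addSubgroupOf (fixedSub G (X →₀ ℤ)) := by
  ext f
  rw [AddMonoidHom.mem_ker, AddSubgroup.mem_addSubgroupOf, AddMonoidHom.mem_range]
  constructor
  · intro hf
    have hdvd (q : Quotient (orbitRel G X)) :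
        (Nat.card (stabilizer G q.out) : ℤ) ∣ (f : X →₀ ℤ) q.out :=
      (ZMod.intCast_zmod_eq_zero_iff_dvd _ _).mp (congr_fun hf q)
    choose c hc using hdvd
    refine ⟨(Finsupp.equivFunOnFinite.symm c).mapDomain Quotient.out, Finsupp.ext fun y => ?_⟩
    have hmk : Quotient.mk (orbitRel G X) ∘ Quotient.out = id := funext Quotient.out_eq
    have hrep : orbitRel G X (Quotient.mk _ y).out y := Quotient.mk_out y
    obtain ⟨τ, hτ⟩ := orbitRel_apply.mp hrep
    rw [normMap_finsupp_apply_eq_card_stabilizer_nsmul, ← Finsupp.mapDomain_comp, hmk,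
      Finsupp.mapDomain_id, Finsupp.coe_equivFunOnFinite_symm,
      ← Nat.card_congr (stabilizerEquivStabilizerOfOrbitRel hrep).toEquiv, nsmul_eq_mul, ← hc,
      ← hτ, (mem_fixedSub_finsupp_iff _).mp f.2]
  · rintro ⟨g, hg⟩
    funext q
    simp only [fixedSubToZMod, AddMonoidHom.coe_mk, ZeroHom.coe_mk, Pi.zero_apply]
    rw [← hg, normMap_finsupp_apply_eq_card_stabilizer_nsmul, nsmul_eq_mul, Int.cast_mul,
      Int.cast_natCast, ZMod.natCast_self, zero_mul]

theorem H0card_finsupp_eq_finprod [Fintype G] [Finite X] :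
    H0card G (X →₀ ℤ) = ∏ᶠ q : Quotient (orbitRel G X), Nat.card (stabilizer G q.out) := by
  have := Fintype.ofFinite (Quotient (orbitRel G X))
  rw [H0card, ← ker_fixedSubToZMod, Nat.card_congr
    (QuotientAddGroup.quotientKerEquivOfSurjective _ fixedSubToZMod_surjective).toEquiv,
    Nat.card_pi, finprod_eq_prod_of_fintype]
  exact Finset.prod_congr rfl fun q _ => Nat.card_zmod _

end FixedPoints

/-- Let `G` be a finite cyclic group (generator `σ`), `X` a finite `G`-set and
`A = ⊕_{x ∈ X} ℤx` the permutation `G`-module on `X`.  Then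
`h(G, A) = ∏_{x ∈ X/G} #G_x`. -/
theorem herbrand_permutation_module_eq_prod_card_stabilizer
    (σ : G) (hgen : ∀ τ : G, τ ∈ Subgroup.zpowers σ)
    (X : Type*) [Finite X] [MulAction G X] :
    herbrand G (X →₀ ℤ) σ =
      (∏ᶠ q : Quotient (MulAction.orbitRel G X),
        Nat.card (MulAction.stabilizer G q.out) : ℕ) := by
  rw [herbrand, H1card_finsupp_eq_one hgen, H0card_finsupp_eq_finprod, Nat.cast_one, div_one]
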